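/- The diagonal set {(q,p,q̃,p̃) : q = q̃, p = p̃} is invariant under the exact flow of the augmented Hamiltonian H̄(q,p,q̃,p̃) = H(q,p̃) + H(q̃,p) + ω(‖q-q̃‖² + ‖p-p̃‖²)/2. -/

import Mathlib

/-!
The vector field of `H̄` commutes with the involution `(q, p, q̃, p̃) ↦ (q̃, p̃, q, p)`, so this
involution maps solutions to solutions. A solution starting on the diagonal, the fixed-point set
of the involution, and its image under the involution have the same initial value; since the
vector field is locally Lipschitz, they coincide for all time.
-/

open Function Set Topology

section Uniqueness

variable {F : Type*} [NormedAddCommGroup F] [NormedSpace ℝ F] {v : F → F} {f g : ℝ → F}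

/-- The set of times where two solutions agree is open by local uniqueness and closed by
continuity, hence all of `ℝ`. -/
theorem ODE_solution_unique_of_locallyLipschitz (hv : LocallyLipschitz v)
    (hf : ∀ t, HasDerivAt f (v (f t)) t) (hg : ∀ t, HasDerivAt g (v (g t)) t)
    {t₀ : ℝ} (heq : f t₀ = g t₀) : f = g := by
  have hf_cont : Continuous f := continuous_iff_continuousAt.2 fun t => (hf t).continuousAt
  have hg_cont : Continuous g := continuous_iff_continuousAt.2 fun t => (hg t).continuousAt
  have hopen : IsOpen {t | f t = g t} := by
    refine isOpen_iff_mem_nhds.2 fun t₁ (ht₁ : f t₁ = g t₁) => ?_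
    obtain ⟨K, s, hs, hK⟩ := hv (f t₁)
    have hs' : s ∈ 𝓝 (g t₁) := ht₁ ▸ hs
    refine ODE_solution_unique_of_eventually (v := fun _ => v) (s := fun _ => s)
      (.of_forall fun _ => hK) ?_ ?_ ht₁
    · filter_upwards [hf_cont.continuousAt.preimage_mem_nhds hs] with t ht using ⟨hf t, ht⟩
    · filter_upwards [hg_cont.continuousAt.preimage_mem_nhds hs'] with t ht using ⟨hg t, ht⟩
  have hclopen : IsClopen {t | f t = g t} := ⟨isClosed_eq hf_cont hg_cont, hopen⟩
  funext t
  exact (hclopen.eq_univ ⟨t₀, heq⟩).ge (mem_univ t)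

theorem ODE_solution_isFixedPt_of_commute (σ : F →L[ℝ] F) (hv : LocallyLipschitz v)
    (hσv : Function.Commute σ v) (hf : ∀ t, HasDerivAt f (v (f t)) t) {t₀ : ℝ}
    (h₀ : IsFixedPt σ (f t₀)) (t : ℝ) : IsFixedPt σ (f t) := by
  have hσf : ∀ t, HasDerivAt (σ ∘ f) (v ((σ ∘ f) t)) t := fun t => by
    simpa only [comp_apply, hσv (f t)] using σ.hasFDerivAt.comp_hasDerivAt t (hf t)
  exact congrFun (ODE_solution_unique_of_locallyLipschitz hv hσf hf h₀) t

end Uniqueness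

section AugmentedHamiltonian

variable {E : Type*} [NormedAddCommGroup E] [NormedSpace ℝ E]

/-- With `G = (∇_q H, ∇_p H)` and `z = ((q, p), (q̃, p̃))`, this is the canonical Hamiltonian
vector field of `H̄(q, p, q̃, p̃) = H(q, p̃) + H(q̃, p) + ω (‖q - q̃‖² + ‖p - p̃‖²) / 2`. -/
def augmentedField (G : E × E → E × E) (ω : ℝ) (z : (E × E) × (E × E)) :
    (E × E) × (E × E) :=
  (((G (z.2.1, z.1.2)).2 + ω • (z.1.2 - z.2.2), -(G (z.1.1, z.2.2)).1 - ω • (z.1.1 - z.2.1)),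
   ((G (z.1.1, z.2.2)).2 + ω • (z.2.2 - z.1.2), -(G (z.2.1, z.1.2)).1 - ω • (z.2.1 - z.1.1)))

theorem augmentedField_commute_prodComm (G : E × E → E × E) (ω : ℝ) :
    Function.Commute (ContinuousLinearEquiv.prodComm ℝ (E × E) (E × E) : _ →L[ℝ] _)
      (augmentedField G ω) :=
  fun _ => rfl

theorem locallyLipschitz_augmentedField {G : E × E → E × E} (hG : LocallyLipschitz G) (ω : ℝ) :
    LocallyLipschitz (augmentedField G ω) := by
  have hsmooth₂ : ∀ {h : (E × E) × (E × E) → E × E}, ContDiff ℝ 1 h → LocallyLipschitz h :=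
    ContDiff.locallyLipschitz
  have hsmooth₁ : ∀ {h : (E × E) × (E × E) → E}, ContDiff ℝ 1 h → LocallyLipschitz h :=
    ContDiff.locallyLipschitz
  have hG₁ : LocallyLipschitz fun z : (E × E) × (E × E) => G (z.1.1, z.2.2) :=
    hG.comp (hsmooth₂ (by fun_prop))
  have hG₂ : LocallyLipschitz fun z : (E × E) × (E × E) => G (z.2.1, z.1.2) :=
    hG.comp (hsmooth₂ (by fun_prop))
  have hfst : LocallyLipschitz (Prod.fst : E × E → E) := LipschitzWith.prod_fst.locallyLipschitz
  have hsnd : LocallyLipschitz (Prod.snd : E × E → E) := LipschitzWith.prod_snd.locallyLipschitz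
  exact (((hsnd.comp hG₂).add (hsmooth₁ (by fun_prop))).prodMk
      ((locallyLipschitz_neg_iff.2 (hfst.comp hG₁)).sub (hsmooth₁ (by fun_prop)))).prodMk
    (((hsnd.comp hG₁).add (hsmooth₁ (by fun_prop))).prodMk
      ((locallyLipschitz_neg_iff.2 (hfst.comp hG₂)).sub (hsmooth₁ (by fun_prop))))

end AugmentedHamiltonian

theorem augmented_flow_diagonal_invariant_general
    {d : ℕ} (H : EuclideanSpace ℝ (Fin d) → EuclideanSpace ℝ (Fin d) → ℝ) (ω : ℝ)
    (hLip : LocallyLipschitz (fun x : EuclideanSpace ℝ (Fin d) × EuclideanSpace ℝ (Fin d) =>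
      (gradient (fun q' => H q' x.2) x.1, gradient (fun p' => H x.1 p') x.2)))
    (Q P Qt Pt : ℝ → EuclideanSpace ℝ (Fin d))
    (hQ : ∀ t : ℝ, HasDerivAt Q
      (gradient (fun p' => H (Qt t) p') (P t) + ω • (P t - Pt t)) t)
    (hP : ∀ t : ℝ, HasDerivAt P
      (-(gradient (fun q' => H q' (Pt t)) (Q t)) - ω • (Q t - Qt t)) t)
    (hQt : ∀ t : ℝ, HasDerivAt Qt
      (gradient (fun p' => H (Q t) p') (Pt t) + ω • (Pt t - P t)) t)
    (hPt : ∀ t : ℝ, HasDerivAt Pt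
      (-(gradient (fun q' => H q' (P t)) (Qt t)) - ω • (Qt t - Q t)) t)
    (hq0 : Q 0 = Qt 0) (hp0 : P 0 = Pt 0) :
    ∀ t : ℝ, Q t = Qt t ∧ P t = Pt t := by
  intro t
  set G := fun x : EuclideanSpace ℝ (Fin d) × EuclideanSpace ℝ (Fin d) =>
    (gradient (fun q' => H q' x.2) x.1, gradient (fun p' => H x.1 p') x.2)
  have hsol : ∀ s, HasDerivAt (fun s => ((Q s, P s), (Qt s, Pt s)))
      (augmentedField G ω ((Q s, P s), (Qt s, Pt s))) s := fun s =>
    ((hQ s).prodMk (hP s)).prodMk ((hQt s).prodMk (hPt s))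
  have hdiag := ODE_solution_isFixedPt_of_commute _ (locallyLipschitz_augmentedField hLip ω)
    (augmentedField_commute_prodComm _ ω) hsol (t₀ := 0) (by simp [IsFixedPt, hq0, hp0]) t
  simp only [IsFixedPt, ContinuousLinearEquiv.coe_coe, ContinuousLinearEquiv.prodComm_apply,
    Prod.swap_prod_mk, Prod.mk.injEq] at hdiag
  exact hdiag.2

/-- The diagonal set `{(q,p,q̃,p̃) : q = q̃, p = p̃}` is invariant under the
exact flow of the augmented Hamiltonian
`H̄(q,p,q̃,p̃) = H(q,p̃) + H(q̃,p) + ω(‖q-q̃‖² + ‖p-p̃‖²)/2`: any solution of the canonical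
Hamilton equations of `H̄` in the extended phase space starting on the diagonal remains
on the diagonal. -/
theorem augmented_flow_diagonal_invariant
    {d : ℕ} (H : EuclideanSpace ℝ (Fin d) → EuclideanSpace ℝ (Fin d) → ℝ) (ω : ℝ)
    (hH : ContDiff ℝ 1 (fun x : EuclideanSpace ℝ (Fin d) × EuclideanSpace ℝ (Fin d) => H x.1 x.2))
    (hLip : LocallyLipschitz (fun x : EuclideanSpace ℝ (Fin d) × EuclideanSpace ℝ (Fin d) =>
      (gradient (fun q' => H q' x.2) x.1, gradient (fun p' => H x.1 p') x.2)))
    (Q P Qt Pt : ℝ → EuclideanSpace ℝ (Fin d))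
    (hQ : ∀ t : ℝ, HasDerivAt Q
      (gradient (fun p' => H (Qt t) p') (P t) + ω • (P t - Pt t)) t)
    (hP : ∀ t : ℝ, HasDerivAt P
      (-(gradient (fun q' => H q' (Pt t)) (Q t)) - ω • (Q t - Qt t)) t)
    (hQt : ∀ t : ℝ, HasDerivAt Qt
      (gradient (fun p' => H (Q t) p') (Pt t) + ω • (Pt t - P t)) t)
    (hPt : ∀ t : ℝ, HasDerivAt Pt
      (-(gradient (fun q' => H q' (P t)) (Qt t)) - ω • (Qt t - Q t)) t)
    (hq0 : Q 0 = Qt 0) (hp0 : P 0 = Pt 0) :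
    ∀ t : ℝ, Q t = Qt t ∧ P t = Pt t :=
  augmented_flow_diagonal_invariant_general H ω hLip Q P Qt Pt hQ hP hQt hPt hq0 hp0
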